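/- arXiv:2210.16664 — 2 statements merged into one kernel-verified Lean document; each statement's English description precedes it below -/
import Mathlib

section
/- Let F(y) = ‖y‖ₒ² be the square of an absolute norm on ℝ^K with ∇F Lipschitz continuous with constant L with respect to ‖·‖ₒ, and let φᵢ(xᵢ) = ‖xᵢ‖ᵢ² be squares of norms on ℝ^{nᵢ} with ∇φᵢ Lipschitz with constant ℓ with respect to ‖·‖ᵢ. Set φ(x) = (φ₁(x₁),…,φ_K(x_K)) and f(x) = F(φ(x))^{1/2}. Then f is the square of a norm on ℝ^{n₁+…+n_K}, and ∇f is Lipschitz continuous with constant 2L + ℓ with respect to that norm (equivalently, f(x+h) ≤ f(x) + ⟨∇f(x), h⟩ + (1/2)(2L+ℓ)f(h) for all x, h). -/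
/-!
Write `v(x) = (N₁(x₁)², …, N_K(x_K)²)`, so that `f = Nₒ ∘ v`. Since `Nₒ` is absolute it is
monotone in the absolute values of the coordinates, and a weighted AM-GM gives the
Cauchy–Schwarz bound `Nₒ(pᵢ qᵢ) ≤ Nₒ(pᵢ²)^{1/2} Nₒ(qᵢ²)^{1/2}`; together they yield the triangle
inequality for `√f`.

For the smoothness inequality, the descent lemma for each `φᵢ` bounds `v(x + h)` coordinatewise
by `v(x) + d + (ℓ/2) v(h)` with `dᵢ = ⟨∇φᵢ(xᵢ), hᵢ⟩`, and the descent lemma for `F` bounds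
`Nₒ(v(x) + d)²` by `f(x)² + 2 f(x) ⟨∇f(x), h⟩ + (L/2) Nₒ(d)²`. Since `|dᵢ| ≤ 2 Nᵢ(xᵢ) Nᵢ(hᵢ)`,
Cauchy–Schwarz gives `Nₒ(d) ≤ 2 √(f(x) f(h))`, and completing the square yields
`Nₒ(v(x) + d) ≤ f(x) + ⟨∇f(x), h⟩ + L f(h)`, using that `L ≥ 2` for the gradient of any squared
norm.
-/

open scoped RealInnerProductSpace
open Real Matrix

/-- `N` is a norm on the real vector space `E`. -/
def IsNorm {E : Type*} [AddCommGroup E] [Module ℝ E] (N : E → ℝ) : Prop :=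
  (∀ x, 0 ≤ N x) ∧ (∀ x, N x = 0 ↔ x = 0) ∧
    (∀ (c : ℝ) (x), N (c • x) = |c| * N x) ∧ ∀ x y, N (x + y) ≤ N x + N y

/-- The conjugate (dual) norm of `N`: `‖y‖_* = sup {⟨y,x⟩ : N x ≤ 1}`. -/
noncomputable def dualNorm {E : Type*} [NormedAddCommGroup E] [InnerProductSpace ℝ E]
    (N : E → ℝ) (y : E) : ℝ :=
  sSup {r | ∃ x, N x ≤ 1 ∧ r = ⟪y, x⟫}

/-- `N` is a `κ`-smooth norm: its square `Φ` is `C¹` and satisfies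
`Φ(x+h) ≤ Φ(x) + ⟨∇Φ(x),h⟩ + κ Φ(h)`. -/
def IsSmoothNorm {E : Type*} [NormedAddCommGroup E] [InnerProductSpace ℝ E] [CompleteSpace E]
    (κ : ℝ) (N : E → ℝ) : Prop :=
  IsNorm N ∧ ContDiff ℝ 1 (fun x => N x ^ 2) ∧
    ∀ x h, N (x + h) ^ 2 ≤
      N x ^ 2 + ⟪gradient (fun z => N z ^ 2) x, h⟫ + κ * N h ^ 2

/-- `N` is a `(κ,ς)`-regular norm: within factor `ς` of a `κ`-smooth norm. -/
def IsRegularNorm {E : Type*} [NormedAddCommGroup E] [InnerProductSpace ℝ E] [CompleteSpace E]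
    (κ ς : ℝ) (N : E → ℝ) : Prop :=
  ∃ M : E → ℝ, IsSmoothNorm κ M ∧ ∀ x, ς⁻¹ * M x ≤ N x ∧ N x ≤ ς * M x

theorem HasGradientAt.hasDerivAt_comp_add_smul {V : Type*} [NormedAddCommGroup V]
    [InnerProductSpace ℝ V] [CompleteSpace V] {Φ : V → ℝ} {g x u : V} {t : ℝ}
    (hg : HasGradientAt Φ g (x + t • u)) :
    HasDerivAt (fun s : ℝ => Φ (x + s • u)) ⟪g, u⟫ t := by
  have hline : HasDerivAt (fun s : ℝ => x + s • u) u t := by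
    simpa using ((hasDerivAt_id t).smul_const u).const_add x
  simpa [Function.comp_def] using hg.hasFDerivAt.comp_hasDerivAt t hline

theorem HasGradientAt.sqrt {V : Type*} [NormedAddCommGroup V] [InnerProductSpace ℝ V]
    [CompleteSpace V] {f : V → ℝ} {g x : V} (hf : HasGradientAt f g x) (hx : f x ≠ 0) :
    HasGradientAt (fun y => √(f y)) ((2 * √(f x))⁻¹ • g) x := by
  rw [hasGradientAt_iff_hasFDerivAt, map_smulₛₗ, RCLike.conj_to_real, ← one_div]
  exact hf.hasFDerivAt.sqrt hx

namespace IsNorm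

section Algebraic

variable {V : Type*} [AddCommGroup V] [Module ℝ V] {N : V → ℝ}

theorem map_zero (hN : IsNorm N) : N 0 = 0 := (hN.2.1 0).mpr rfl

theorem pos (hN : IsNorm N) {x : V} (hx : x ≠ 0) : 0 < N x :=
  (hN.1 x).lt_of_ne fun h => hx ((hN.2.1 x).mp h.symm)

theorem map_neg (hN : IsNorm N) (x : V) : N (-x) = N x := by
  simpa using hN.2.2.1 (-1) x

def toSeminorm (hN : IsNorm N) : Seminorm ℝ V :=
  Seminorm.of N hN.2.2.2 fun c x => by rw [hN.2.2.1, Real.norm_eq_abs]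

end Algebraic

section Continuity

variable {V : Type*} [NormedAddCommGroup V] [NormedSpace ℝ V] [FiniteDimensional ℝ V]
  {N : V → ℝ}

theorem continuous (hN : IsNorm N) : Continuous N :=
  continuousOn_univ.mp (hN.toSeminorm.convexOn.continuousOn isOpen_univ)

theorem exists_le_mul_norm (hN : IsNorm N) : ∃ C, 0 < C ∧ ∀ x, N x ≤ C * ‖x‖ :=
  hN.toSeminorm.bound_of_continuous_normedSpace hN.continuous

theorem exists_mul_norm_le (hN : IsNorm N) : ∃ c, 0 < c ∧ ∀ x, c * ‖x‖ ≤ N x := by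
  cases subsingleton_or_nontrivial V with
  | inl _ => exact ⟨1, one_pos, fun x => by simp [Subsingleton.elim x 0, hN.map_zero]⟩
  | inr _ =>
    obtain ⟨y, hy, hmin⟩ := (isCompact_sphere (0 : V) 1).exists_isMinOn
      (NormedSpace.sphere_nonempty.mpr zero_le_one) hN.continuous.continuousOn
    refine ⟨N y, hN.pos (ne_zero_of_mem_sphere one_ne_zero ⟨y, hy⟩), fun x => ?_⟩
    rcases eq_or_ne x 0 with rfl | hx
    · simp [hN.map_zero]
    have hxn : 0 < ‖x‖ := norm_pos_iff.mpr hx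
    have hu : ‖x‖⁻¹ • x ∈ Metric.sphere (0 : V) 1 := by
      simp [norm_smul, hxn.ne']
    have := hmin hu
    rw [Set.mem_ofPred_eq, hN.2.2.1, abs_of_pos (inv_pos.mpr hxn)] at this
    calc N y * ‖x‖ ≤ ‖x‖⁻¹ * N x * ‖x‖ := by gcongr
      _ = N x := by field_simp

end Continuity

variable {V : Type*} [NormedAddCommGroup V] [InnerProductSpace ℝ V] [FiniteDimensional ℝ V]
  {N : V → ℝ}

theorem inner_le_dualNorm_mul (hN : IsNorm N) (u z : V) : ⟪u, z⟫ ≤ dualNorm N u * N z := by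
  rcases eq_or_ne z 0 with rfl | hz
  · simp [hN.map_zero]
  obtain ⟨c, hc, hcN⟩ := hN.exists_mul_norm_le
  have hbdd : BddAbove {r | ∃ x, N x ≤ 1 ∧ r = ⟪u, x⟫} := by
    refine ⟨‖u‖ * c⁻¹, fun r ⟨x, hx, hr⟩ => hr ▸ ?_⟩
    have hxc : ‖x‖ ≤ c⁻¹ := by
      rw [← one_div, le_div_iff₀' hc]; linarith [hcN x]
    exact (real_inner_le_norm u x).trans (by gcongr)
  have hNz := hN.pos hz
  have hmem : ⟪u, (N z)⁻¹ • z⟫ ∈ {r | ∃ x, N x ≤ 1 ∧ r = ⟪u, x⟫} :=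
    ⟨_, by rw [hN.2.2.1, abs_of_pos (inv_pos.mpr hNz), inv_mul_cancel₀ hNz.ne'], rfl⟩
  have hle := le_csSup hbdd hmem
  rw [real_inner_smul_right, inv_mul_le_iff₀ hNz] at hle
  unfold dualNorm
  linarith

theorem inner_le_of_hasGradientAt_sq (hN : IsNorm N) {g x : V}
    (hg : HasGradientAt (fun y => N y ^ 2) g x) (u : V) : ⟪g, u⟫ ≤ 2 * N x * N u := by
  set ψ : ℝ → ℝ := fun s => (N x + s * N u) ^ 2 - N (x + s • u) ^ 2
  have hψ : HasDerivAt ψ (2 * N x * N u - ⟪g, u⟫) 0 := by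
    have h1 := (((hasDerivAt_id (0 : ℝ)).mul_const (N u)).const_add (N x)).pow 2
    have h2 := HasGradientAt.hasDerivAt_comp_add_smul (Φ := fun y => N y ^ 2) (t := 0) (u := u)
      (by simpa using hg)
    exact (h1.sub h2).congr_deriv (by simp)
  -- `ψ ≥ 0 = ψ 0` on `[0, ∞)` by the triangle inequality
  have hmin : IsLocalMinOn ψ (Set.Ici 0) 0 := by
    refine Filter.eventually_of_mem self_mem_nhdsWithin fun s (hs : 0 ≤ s) => ?_
    have htri : N (x + s • u) ≤ N x + s * N u := by
      simpa [hN.2.2.1, abs_of_nonneg hs] using hN.2.2.2 x (s • u)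
    have := pow_le_pow_left₀ (hN.1 _) htri 2
    simp only [ψ, zero_mul, add_zero, zero_smul, sub_self]
    linarith
  have := hmin.hasFDerivWithinAt_nonneg hψ.hasFDerivAt.hasFDerivWithinAt
    (y := 1) (mem_posTangentConeAt_of_segment_subset (by simp [Set.Icc_subset_Ici_self]))
  simpa using this

theorem abs_inner_le_of_hasGradientAt_sq (hN : IsNorm N) {g x : V}
    (hg : HasGradientAt (fun y => N y ^ 2) g x) (u : V) : |⟪g, u⟫| ≤ 2 * N x * N u := by
  have hneg := hN.inner_le_of_hasGradientAt_sq hg (-u)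
  rw [inner_neg_right, hN.map_neg] at hneg
  exact abs_le.mpr ⟨by linarith, hN.inner_le_of_hasGradientAt_sq hg u⟩

theorem hasGradientAt_sq_zero (hN : IsNorm N) : HasGradientAt (fun y => N y ^ 2) 0 0 := by
  obtain ⟨C, -, hC⟩ := hN.exists_le_mul_norm
  rw [hasGradientAt_iff_hasFDerivAt, _root_.map_zero, hasFDerivAt_iff_isLittleO_nhds_zero]
  have hO : (fun h : V => N (0 + h) ^ 2 - N 0 ^ 2 - (0 : V →L[ℝ] ℝ) h) =O[nhds 0]
      fun h => ‖h‖ ^ 2 := by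
    refine Asymptotics.IsBigO.of_bound (C ^ 2) (Filter.Eventually.of_forall fun h => ?_)
    have := pow_le_pow_left₀ (hN.1 h) (hC h) 2
    simp only [zero_add, hN.map_zero, _root_.zero_apply, Real.norm_eq_abs]
    rw [abs_of_nonneg (by simp [sq_nonneg]), abs_of_nonneg (by positivity)]
    linarith [mul_pow C ‖h‖ 2]
  exact hO.trans_isLittleO (Asymptotics.isLittleO_norm_pow_id one_lt_two)

theorem descent_lemma (hN : IsNorm N) {g : V → V}
    (hg : ∀ y, HasGradientAt (fun z => N z ^ 2) (g y) y) {C : ℝ}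
    (hlip : ∀ y y', dualNorm N (g y - g y') ≤ C * N (y - y')) (x k : V) :
    N (x + k) ^ 2 ≤ N x ^ 2 + ⟪g x, k⟫ + C / 2 * N k ^ 2 := by
  set θ : ℝ → ℝ := fun t => N (x + t • k) ^ 2 - t * ⟪g x, k⟫ - C / 2 * t ^ 2 * N k ^ 2
  have hθ : ∀ t, HasDerivAt θ (⟪g (x + t • k) - g x, k⟫ - C * t * N k ^ 2) t := by
    intro t
    have h1 := HasGradientAt.hasDerivAt_comp_add_smul (hg (x + t • k))
    have h2 := (hasDerivAt_id t).mul_const ⟪g x, k⟫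
    have h3 := ((hasDerivAt_pow 2 t).const_mul (C / 2)).mul_const (N k ^ 2)
    exact ((h1.sub h2).sub h3).congr_deriv (by rw [inner_sub_left]; ring)
  have hθ' : ∀ t ∈ interior (Set.Icc (0 : ℝ) 1), deriv θ t ≤ 0 := by
    intro t ht
    rw [interior_Icc] at ht
    have hpair := hN.inner_le_dualNorm_mul (g (x + t • k) - g x) k
    have hl := hlip (x + t • k) x
    rw [add_sub_cancel_left, hN.2.2.1, abs_of_pos ht.1] at hl
    rw [(hθ t).deriv]
    nlinarith [hN.1 k]
  have hanti := antitoneOn_of_deriv_nonpos (convex_Icc (0 : ℝ) 1)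
    (fun t _ => (hθ t).continuousAt.continuousWithinAt)
    (fun t _ => (hθ t).differentiableAt.differentiableWithinAt) hθ'
  have h01 := hanti (Set.left_mem_Icc.mpr zero_le_one) (Set.right_mem_Icc.mpr zero_le_one)
    zero_le_one
  simp only [θ, zero_smul, add_zero, one_smul, zero_mul, sub_zero, one_mul, one_pow,
    ne_eq, OfNat.ofNat_ne_zero, not_false_eq_true, zero_pow, mul_zero] at h01
  linarith

theorem two_le_of_lipschitz_gradient (hN : IsNorm N) {g : V → V}
    (hg : ∀ y, HasGradientAt (fun z => N z ^ 2) (g y) y) {C : ℝ}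
    (hlip : ∀ y y', dualNorm N (g y - g y') ≤ C * N (y - y')) {k : V} (hk : k ≠ 0) :
    2 ≤ C := by
  have hg0 : g 0 = 0 := (hg 0).unique hN.hasGradientAt_sq_zero
  have h := hN.descent_lemma hg hlip 0 k
  rw [zero_add, hg0, inner_zero_left, hN.map_zero] at h
  have hk := pow_pos (hN.pos hk) 2
  nlinarith

end IsNorm

def IsAbsolute {ι : Type*} (N : EuclideanSpace ℝ ι → ℝ) : Prop :=
  ∀ t, N t = N (WithLp.toLp 2 fun i => |t i|)

namespace IsAbsolute

variable {ι : Type*} {N : EuclideanSpace ℝ ι → ℝ}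

theorem eq_of_abs_eq (habs : IsAbsolute N) {u w : EuclideanSpace ℝ ι}
    (h : ∀ i, |u i| = |w i|) : N u = N w := by
  rw [habs u, habs w]
  simp only [h]

theorem le_of_abs_le_of_eq_of_ne (habs : IsAbsolute N) (hN : IsNorm N)
    {u w : EuclideanSpace ℝ ι} (i : ι) (hi : |u i| ≤ |w i|) (hne : ∀ j ≠ i, u j = w j) :
    N u ≤ N w := by
  classical
  rcases eq_or_ne (w i) 0 with hw0 | hw0
  · have hu : u = w := by
      ext j
      rcases eq_or_ne j i with rfl | hj
      · rw [hw0, abs_zero, abs_nonpos_iff] at hi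
        rw [hi, hw0]
      · exact hne j hj
    rw [hu]
  -- `u` lies on the segment from `w` to its reflection in the `i`-th coordinate hyperplane
  set w' : EuclideanSpace ℝ ι := WithLp.toLp 2 (Function.update w.ofLp i (-w i))
  have hw' : N w' = N w := habs.eq_of_abs_eq fun j => by
    rcases eq_or_ne j i with rfl | hj <;> simp [w', *]
  set θ := (1 + u i / w i) / 2
  have hθ : |u i / w i| ≤ 1 := by rwa [abs_div, div_le_one (abs_pos.mpr hw0)]
  have hθ0 : 0 ≤ θ := by simp only [θ]; linarith [(abs_le.mp hθ).1]
  have hθ1 : 0 ≤ 1 - θ := by simp only [θ]; linarith [(abs_le.mp hθ).2]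
  have hu : u = θ • w + (1 - θ) • w' := by
    ext j
    rcases eq_or_ne j i with rfl | hj
    · simp only [w', θ, PiLp.add_apply, PiLp.smul_apply, smul_eq_mul, Function.update_self]
      field_simp
      ring
    · simp [w', hj, hne j hj]
      ring
  calc N u ≤ θ * N w + (1 - θ) * N w' :=
        hu ▸ hN.toSeminorm.convexOn.2 (Set.mem_univ _) (Set.mem_univ _)
          hθ0 hθ1 (by ring)
    _ = N w := by rw [hw']; ring

variable [Fintype ι]

theorem mono (habs : IsAbsolute N) (hN : IsNorm N) {u w : EuclideanSpace ℝ ι}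
    (h : ∀ i, |u i| ≤ |w i|) : N u ≤ N w := by
  classical
  suffices ∀ s : Finset ι, ∀ u : EuclideanSpace ℝ ι, (∀ i, |u i| ≤ |w i|) →
      (∀ i ∉ s, u i = w i) → N u ≤ N w from this Finset.univ u h (by simp)
  intro s
  induction s using Finset.induction_on with
  | empty =>
    intro u _ hu
    rw [show u = w by ext i; exact hu i (Finset.notMem_empty i)]
  | insert a s _ ih =>
    intro u hle hu
    set u' : EuclideanSpace ℝ ι := WithLp.toLp 2 (Function.update u.ofLp a (w a))
    have hu'a : u' a = w a := by simp [u']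
    have hu'ne : ∀ j ≠ a, u' j = u j := fun j hj => by simp [u', hj]
    refine (habs.le_of_abs_le_of_eq_of_ne hN a (hu'a ▸ hle a)
      fun j hj => (hu'ne j hj).symm).trans (ih u' (fun j => ?_) fun j hj => ?_)
    · rcases eq_or_ne j a with rfl | hj
      · rw [hu'a]
      · rw [hu'ne j hj]; exact hle j
    · rcases eq_or_ne j a with rfl | hja
      · exact hu'a
      · rw [hu'ne j hja]; exact hu j (by simp [hja, hj])

theorem le_sqrt_mul_sqrt (habs : IsAbsolute N) (hN : IsNorm N) (p q : ι → ℝ) :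
    N (WithLp.toLp 2 fun i => p i * q i) ≤
      √(N (WithLp.toLp 2 fun i => p i ^ 2)) * √(N (WithLp.toLp 2 fun i => q i ^ 2)) := by
  set A := N (WithLp.toLp 2 fun i => p i ^ 2)
  set B := N (WithLp.toLp 2 fun i => q i ^ 2)
  have hzero : ∀ r : ι → ℝ, N (WithLp.toLp 2 fun i => r i ^ 2) = 0 → ∀ i, r i = 0 :=
    fun r hr i => pow_eq_zero_iff two_ne_zero |>.mp
      (by simpa using congrArg (· i) ((hN.2.1 _).mp hr))
  have hzero_mul : (∀ i, p i * q i = 0) → N (WithLp.toLp 2 fun i => p i * q i) ≤ √A * √B := by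
    intro h
    rw [show (WithLp.toLp 2 fun i => p i * q i : EuclideanSpace ℝ ι) = 0 by ext i; simp [h],
      hN.map_zero]
    positivity
  rcases (hN.1 _ : 0 ≤ A).eq_or_lt with hA | hA
  · exact hzero_mul fun i => by simp [hzero p hA.symm]
  rcases (hN.1 _ : 0 ≤ B).eq_or_lt with hB | hB
  · exact hzero_mul fun i => by simp [hzero q hB.symm]
  -- weighted AM-GM `2 t |p q| ≤ t² p² + q²` coordinatewise, with the optimal `t = √B / √A`
  set t := √B / √A
  have ht : 0 < t := by positivity
  have hamgm : N ((2 * t) • WithLp.toLp 2 fun i => p i * q i) ≤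
      N (t ^ 2 • (WithLp.toLp 2 fun i => p i ^ 2) + WithLp.toLp 2 fun i => q i ^ 2) := by
    refine habs.mono hN fun i => ?_
    simp only [PiLp.smul_apply, PiLp.add_apply, smul_eq_mul]
    rw [abs_of_nonneg (show 0 ≤ t ^ 2 * p i ^ 2 + q i ^ 2 by positivity), abs_mul,
      abs_of_pos (by positivity : (0 : ℝ) < 2 * t), abs_mul]
    nlinarith [sq_nonneg (t * |p i| - |q i|), sq_abs (p i), sq_abs (q i)]
  rw [hN.2.2.1, abs_of_pos (by positivity)] at hamgm
  have htri : N (t ^ 2 • (WithLp.toLp 2 fun i => p i ^ 2) + WithLp.toLp 2 fun i => q i ^ 2) ≤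
      t ^ 2 * A + B := by
    refine (hN.2.2.2 _ _).trans_eq ?_
    rw [hN.2.2.1, abs_of_nonneg (by positivity)]
  have hsA : √A ^ 2 = A := Real.sq_sqrt hA.le
  have hsB : √B ^ 2 = B := Real.sq_sqrt hB.le
  have hAB : 2 * t * N (WithLp.toLp 2 fun i => p i * q i) ≤ t ^ 2 * A + B :=
    hamgm.trans htri
  have ht' : t * √A = √B := div_mul_cancel₀ _ (Real.sqrt_pos.mpr hA).ne'
  nlinarith [Real.sqrt_pos.mpr hA, Real.sqrt_pos.mpr hB]

end IsAbsolute

section Blockwise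

variable {ι : Type*} [Fintype ι] {E : ι → Type*} [∀ i, NormedAddCommGroup (E i)]
  [∀ i, InnerProductSpace ℝ (E i)]

theorem PiLp.inner_toLp_smul (a : EuclideanSpace ℝ ι) (g : ∀ i, E i) (h : PiLp 2 E) :
    ⟪(WithLp.toLp 2 fun i => a i • g i : PiLp 2 E), h⟫ =
      ⟪a, WithLp.toLp 2 fun i => ⟪g i, h i⟫⟫ := by
  simp only [PiLp.inner_apply, real_inner_smul_left, RCLike.inner_apply,
    conj_trivial, mul_comm]

variable [∀ i, CompleteSpace (E i)]

theorem HasGradientAt.comp_toLp_pi {F : EuclideanSpace ℝ ι → ℝ} {φ : ∀ i, E i → ℝ}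
    {gF : EuclideanSpace ℝ ι} {gφ : ∀ i, E i} {x : PiLp 2 E}
    (hF : HasGradientAt F gF (WithLp.toLp 2 fun i => φ i (x i)))
    (hφ : ∀ i, HasGradientAt (φ i) (gφ i) (x i)) :
    HasGradientAt (fun y : PiLp 2 E => F (WithLp.toLp 2 fun i => φ i (y i)))
      (WithLp.toLp 2 fun i => gF i • gφ i) x := by
  have hcoord : HasFDerivAt (fun y : PiLp 2 E => fun i => φ i (y i))
      (ContinuousLinearMap.pi fun i =>
        (InnerProductSpace.toDual ℝ (E i) (gφ i)).comp (PiLp.proj 2 E i)) x :=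
    hasFDerivAt_pi.mpr fun i => (hφ i).hasFDerivAt.comp x (PiLp.proj 2 E i).hasFDerivAt
  have h := hF.hasFDerivAt.comp x
    ((EuclideanSpace.equiv ι ℝ).symm.hasFDerivAt.comp x hcoord)
  rw [hasGradientAt_iff_hasFDerivAt]
  refine h.congr_fderiv (ContinuousLinearMap.ext fun v => ?_)
  simp [PiLp.inner_toLp_smul]

end Blockwise

section SqNorms

variable {ι : Type*} {E : ι → Type*} {N : ∀ i, E i → ℝ}

/-- The paper's `φ(x) = (φ₁(x₁), …, φ_K(x_K))` with `φᵢ = Nᵢ²`. -/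
def sqNorms (N : ∀ i, E i → ℝ) (x : PiLp 2 E) : EuclideanSpace ℝ ι :=
  WithLp.toLp 2 fun i => N i (x i) ^ 2

@[simp]
theorem sqNorms_apply (x : PiLp 2 E) (i : ι) : sqNorms N x i = N i (x i) ^ 2 := rfl

variable [∀ i, NormedAddCommGroup (E i)] [∀ i, NormedSpace ℝ (E i)]

theorem sqNorms_smul (hN : ∀ i, IsNorm (N i)) (c : ℝ) (x : PiLp 2 E) :
    sqNorms N (c • x) = c ^ 2 • sqNorms N x := by
  ext i
  simp [(hN i).2.2.1, mul_pow]

theorem sqNorms_eq_zero (hN : ∀ i, IsNorm (N i)) {x : PiLp 2 E} :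
    sqNorms N x = 0 ↔ x = 0 := by
  refine ⟨fun h => ?_, fun h => ?_⟩
  · ext i
    have := congrArg (· i) h
    simpa [(hN i).2.1] using this
  · ext i
    simp [h, (hN i).map_zero]

variable [Fintype ι] {No : EuclideanSpace ℝ ι → ℝ}

theorem IsNorm.sqrt_comp_sqNorms (hNo : IsNorm No) (habs : IsAbsolute No)
    (hN : ∀ i, IsNorm (N i)) : IsNorm fun x : PiLp 2 E => √(No (sqNorms N x)) := by
  refine ⟨fun x => Real.sqrt_nonneg _, fun x => ?_, fun c x => ?_, fun x y => ?_⟩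
  · dsimp only
    rw [Real.sqrt_eq_zero (hNo.1 _), hNo.2.1, sqNorms_eq_zero hN]
  · dsimp only
    rw [sqNorms_smul hN, hNo.2.2.1, abs_of_nonneg (sq_nonneg c), Real.sqrt_mul (sq_nonneg c),
      Real.sqrt_sq_eq_abs]
  dsimp only
  set p : EuclideanSpace ℝ ι := WithLp.toLp 2 fun i => N i (x i) * N i (y i)
  have hcoord : ∀ i, |sqNorms N (x + y) i| ≤ |(sqNorms N x + (2 : ℝ) • p + sqNorms N y) i| := by
    intro i
    have htri := pow_le_pow_left₀ ((hN i).1 _) ((hN i).2.2.2 (x i) (y i)) 2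
    refine abs_le_abs_of_nonneg (sq_nonneg _) ?_
    simp only [sqNorms_apply, PiLp.add_apply, PiLp.smul_apply, smul_eq_mul, p] at htri ⊢
    linarith
  have hsum : No (sqNorms N (x + y)) ≤ No (sqNorms N x) + 2 * No p + No (sqNorms N y) := by
    refine (habs.mono hNo hcoord).trans ?_
    refine ((hNo.2.2.2 _ _).trans (add_le_add_left (hNo.2.2.2 _ _) _)).trans_eq ?_
    rw [hNo.2.2.1, abs_two]
  have hp := habs.le_sqrt_mul_sqrt hNo (fun i => N i (x i)) (fun i => N i (y i))
  refine Real.sqrt_le_iff.mpr ⟨by positivity, ?_⟩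
  have hx := Real.sq_sqrt (hNo.1 (sqNorms N x))
  have hy := Real.sq_sqrt (hNo.1 (sqNorms N y))
  simp only [sqNorms] at hp hx hy hsum ⊢
  nlinarith

end SqNorms

theorem le_sq_add_inv_mul_add_of_sq_le {p q c D S L : ℝ} (hp : 0 ≤ p) (hq : 0 ≤ q)
    (hL : 2 ≤ L) (hD : 0 ≤ D) (hDpq : D ≤ 2 * p * q) (hc : |c| ≤ 2 * p ^ 2 * D)
    (hS2 : S ^ 2 ≤ (p ^ 2) ^ 2 + c + L / 2 * D ^ 2) :
    S ≤ p ^ 2 + (2 * p ^ 2)⁻¹ * c + L * q ^ 2 := by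
  rcases hp.eq_or_lt with rfl | hp
  · have hc0 : c = 0 := abs_nonpos_iff.mp (by simpa using hc)
    have hD0 : D = 0 := by linarith
    subst hc0 hD0
    norm_num at hS2 ⊢
    rw [hS2]
    positivity
  obtain ⟨b, rfl⟩ : ∃ b, c = 2 * p ^ 2 * b := ⟨(2 * p ^ 2)⁻¹ * c, by field_simp⟩
  have hb : |b| ≤ D := by
    rw [abs_mul, abs_of_pos (by positivity)] at hc
    exact le_of_mul_le_mul_left hc (by positivity)
  rw [← mul_assoc, inv_mul_cancel₀ (by positivity), one_mul]
  have hR : 0 ≤ p ^ 2 + b + L * q ^ 2 := by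
    nlinarith [neg_abs_le b, sq_nonneg (p - q)]
  -- `(p² + b + L q²)² = p⁴ + 2p²b + 2L p² q² + (b + L q²)²`
  nlinarith [sq_nonneg (b + L * q ^ 2), mul_le_mul hDpq hDpq hD (by positivity)]

section Composite

variable {ι : Type*} [Fintype ι] {E : ι → Type*} [∀ i, NormedAddCommGroup (E i)]
  [∀ i, InnerProductSpace ℝ (E i)] [∀ i, FiniteDimensional ℝ (E i)]
  {N : ∀ i, E i → ℝ} {No : EuclideanSpace ℝ ι → ℝ}

theorem IsNorm.hasGradientAt_comp_sqNorms (hNo : IsNorm No) (habs : IsAbsolute No)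
    (hN : ∀ i, IsNorm (N i)) {gF : EuclideanSpace ℝ ι} {gφ : ∀ i, E i} {x : PiLp 2 E}
    (hgF : HasGradientAt (fun y => No y ^ 2) gF (sqNorms N x))
    (hgφ : ∀ i, HasGradientAt (fun z => N i z ^ 2) (gφ i) (x i)) :
    HasGradientAt (fun y => No (sqNorms N y))
      ((2 * No (sqNorms N x))⁻¹ • WithLp.toLp 2 fun i => gF i • gφ i) x := by
  have hsqrt : ∀ y, √(No (sqNorms N y) ^ 2) = No (sqNorms N y) :=
    fun y => Real.sqrt_sq (hNo.1 _)
  rcases eq_or_ne x 0 with rfl | hx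
  · have h0 := (hNo.sqrt_comp_sqNorms habs hN).hasGradientAt_sq_zero
    simp only [Real.sq_sqrt (hNo.1 _)] at h0
    rwa [(sqNorms_eq_zero hN).mpr rfl, hNo.map_zero, mul_zero, _root_.inv_zero, zero_smul]
  · have hpos := hNo.pos ((sqNorms_eq_zero hN).not.mpr hx)
    have h : HasGradientAt (fun y => √(No (sqNorms N y) ^ 2))
        ((2 * √(No (sqNorms N x) ^ 2))⁻¹ • WithLp.toLp 2 fun i => gF i • gφ i) x :=
      (HasGradientAt.comp_toLp_pi (φ := fun i z => N i z ^ 2) hgF hgφ).sqrt (by positivity)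
    simpa only [hsqrt] using h

theorem IsAbsolute.sqNorms_add_le (habs : IsAbsolute No) (hNo : IsNorm No)
    (hN : ∀ i, IsNorm (N i)) {ℓ : ℝ} (hℓ : 0 ≤ ℓ) {gφ : ∀ i, E i → E i}
    (hgφ : ∀ i z, HasGradientAt (fun w => N i w ^ 2) (gφ i z) z)
    (hgφlip : ∀ i z z', dualNorm (N i) (gφ i z - gφ i z') ≤ ℓ * N i (z - z')) (x h : PiLp 2 E) :
    No (sqNorms N (x + h)) ≤
      No (sqNorms N x + WithLp.toLp 2 fun i => ⟪gφ i (x i), h i⟫) +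
        ℓ / 2 * No (sqNorms N h) := by
  set d : EuclideanSpace ℝ ι := WithLp.toLp 2 fun i => ⟪gφ i (x i), h i⟫
  calc No (sqNorms N (x + h)) ≤ No (sqNorms N x + d + (ℓ / 2) • sqNorms N h) :=
        habs.mono hNo fun i => abs_le_abs_of_nonneg (sq_nonneg _) (by
          simpa [d] using (hN i).descent_lemma (hgφ i) (hgφlip i) (x i) (h i))
    _ ≤ No (sqNorms N x + d) + ℓ / 2 * No (sqNorms N h) := by
        refine (hNo.2.2.2 _ _).trans_eq ?_
        rw [hNo.2.2.1, abs_of_nonneg (by positivity)]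

theorem IsAbsolute.toLp_inner_le (habs : IsAbsolute No) (hNo : IsNorm No)
    (hN : ∀ i, IsNorm (N i)) {gφ : ∀ i, E i} {x : PiLp 2 E}
    (hgφ : ∀ i, HasGradientAt (fun w => N i w ^ 2) (gφ i) (x i)) (h : PiLp 2 E) :
    No (WithLp.toLp 2 fun i => ⟪gφ i, h i⟫) ≤
      2 * √(No (sqNorms N x)) * √(No (sqNorms N h)) := by
  have hcs := habs.le_sqrt_mul_sqrt hNo (fun i => N i (x i)) (fun i => N i (h i))
  have hcoord : ∀ i, |⟪gφ i, h i⟫| ≤ |((2 : ℝ) • WithLp.toLp 2 fun i => N i (x i) * N i (h i) :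
      EuclideanSpace ℝ ι) i| := fun i => by
    simpa [abs_of_nonneg ((hN i).1 _), mul_assoc] using
      (hN i).abs_inner_le_of_hasGradientAt_sq (hgφ i) (h i)
  refine (habs.mono hNo hcoord).trans ?_
  rw [hNo.2.2.1, abs_two, mul_assoc]
  exact mul_le_mul_of_nonneg_left hcs zero_le_two

theorem IsAbsolute.sqNorms_descent (habs : IsAbsolute No) (hNo : IsNorm No)
    (hN : ∀ i, IsNorm (N i)) {L ℓ : ℝ} (hℓ : 0 ≤ ℓ) {gF : EuclideanSpace ℝ ι → EuclideanSpace ℝ ι}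
    (hgF : ∀ y, HasGradientAt (fun z => No z ^ 2) (gF y) y)
    (hgFlip : ∀ y y', dualNorm No (gF y - gF y') ≤ L * No (y - y')) {gφ : ∀ i, E i → E i}
    (hgφ : ∀ i z, HasGradientAt (fun w => N i w ^ 2) (gφ i z) z)
    (hgφlip : ∀ i z z', dualNorm (N i) (gφ i z - gφ i z') ≤ ℓ * N i (z - z')) (x h : PiLp 2 E) :
    No (sqNorms N (x + h)) ≤ No (sqNorms N x) +
      ⟪(2 * No (sqNorms N x))⁻¹ • WithLp.toLp 2 fun i => gF (sqNorms N x) i • gφ i (x i), h⟫ +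
        (L + ℓ / 2) * No (sqNorms N h) := by
  rcases eq_or_ne h 0 with rfl | hh
  · simp [(sqNorms_eq_zero hN).mpr rfl, hNo.map_zero]
  set d : EuclideanSpace ℝ ι := WithLp.toLp 2 fun i => ⟪gφ i (x i), h i⟫
  have hL := hNo.two_le_of_lipschitz_gradient hgF hgFlip ((sqNorms_eq_zero hN).not.mpr hh)
  have hp := Real.sq_sqrt (hNo.1 (sqNorms N x))
  have hq := Real.sq_sqrt (hNo.1 (sqNorms N h))
  have hS := le_sq_add_inv_mul_add_of_sq_le (S := No (sqNorms N x + d))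
    (Real.sqrt_nonneg _) (Real.sqrt_nonneg _) hL
    (hNo.1 d) (habs.toLp_inner_le hNo hN (fun i => hgφ i (x i)) h)
    (by rw [hp]; exact hNo.abs_inner_le_of_hasGradientAt_sq (hgF _) d)
    (by rw [hp]; exact hNo.descent_lemma hgF hgFlip _ d)
  rw [hp, hq] at hS
  rw [real_inner_smul_left, PiLp.inner_toLp_smul]
  linarith [habs.sqNorms_add_le hNo hN hℓ hgφ hgφlip x h]

end Composite

theorem stmt_15_general {K : ℕ} (n : Fin K → ℕ)
    (No : EuclideanSpace ℝ (Fin K) → ℝ) (hNo : IsNorm No)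
    (hNoabs : ∀ t : EuclideanSpace ℝ (Fin K), No t = No (WithLp.toLp 2 (fun i => |t i|)))
    (L ℓ : ℝ) (hℓ : 0 ≤ ℓ)
    (F : EuclideanSpace ℝ (Fin K) → ℝ) (hF : ∀ y, F y = No y ^ 2)
    (gF : EuclideanSpace ℝ (Fin K) → EuclideanSpace ℝ (Fin K))
    (hgF : ∀ y, HasGradientAt F (gF y) y)
    (hgFlip : ∀ y y', dualNorm No (gF y - gF y') ≤ L * No (y - y'))
    (Ni : ∀ i, EuclideanSpace ℝ (Fin (n i)) → ℝ) (hNi : ∀ i, IsNorm (Ni i))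
    (φ : ∀ i, EuclideanSpace ℝ (Fin (n i)) → ℝ)
    (hφ : ∀ i x, φ i x = Ni i x ^ 2)
    (gφ : ∀ i, EuclideanSpace ℝ (Fin (n i)) → EuclideanSpace ℝ (Fin (n i)))
    (hgφ : ∀ i x, HasGradientAt (φ i) (gφ i x) x)
    (hgφlip : ∀ i x x', dualNorm (Ni i) (gφ i x - gφ i x') ≤ ℓ * Ni i (x - x'))
    (f : PiLp 2 (fun i => EuclideanSpace ℝ (Fin (n i))) → ℝ)
    (hf : ∀ x, f x = Real.sqrt (F (WithLp.toLp 2 (fun i => φ i (x i))))) :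
    (∃ M : PiLp 2 (fun i => EuclideanSpace ℝ (Fin (n i))) → ℝ,
      IsNorm M ∧ ∀ x, f x = M x ^ 2) ∧
    ∃ gf : PiLp 2 (fun i => EuclideanSpace ℝ (Fin (n i))) →
        PiLp 2 (fun i => EuclideanSpace ℝ (Fin (n i))),
      (∀ x, HasGradientAt f (gf x) x) ∧
        ∀ x h, f (x + h) ≤ f x + ⟪gf x, h⟫ + 1 / 2 * (2 * L + ℓ) * f h := by
  obtain rfl : F = fun y => No y ^ 2 := funext hF
  obtain rfl : φ = fun i x => Ni i x ^ 2 := funext fun i => funext (hφ i)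
  obtain rfl : f = fun x => No (sqNorms Ni x) :=
    funext fun x => (hf x).trans (Real.sqrt_sq (hNo.1 _))
  refine ⟨⟨_, hNo.sqrt_comp_sqNorms hNoabs hNi, fun x => (Real.sq_sqrt (hNo.1 _)).symm⟩, _,
    fun x => hNo.hasGradientAt_comp_sqNorms hNoabs hNi (hgF _) fun i => hgφ i (x i),
    fun x h => ?_⟩
  have := IsAbsolute.sqNorms_descent hNoabs hNo hNi hℓ hgF hgFlip hgφ hgφlip x h
  dsimp only
  linarith

/-- if `F` is the square of an absolute norm with `L`-Lipschitz
gradient and `φᵢ` are squares of norms with `ℓ`-Lipschitz gradients, then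
`f(x) = F(φ₁(x₁),…,φ_K(x_K))^{1/2}` is the square of a norm whose gradient is
Lipschitz with constant `2L + ℓ` w.r.t. that norm, equivalently
`f(x+h) ≤ f(x) + ⟨∇f(x),h⟩ + ½(2L+ℓ)f(h)`. -/
theorem stmt_15 {K : ℕ} (n : Fin K → ℕ)
    (No : EuclideanSpace ℝ (Fin K) → ℝ) (hNo : IsNorm No)
    (hNoabs : ∀ t : EuclideanSpace ℝ (Fin K), No t = No (WithLp.toLp 2 (fun i => |t i|)))
    (L ℓ : ℝ) (hL : 0 ≤ L) (hℓ : 0 ≤ ℓ)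
    (F : EuclideanSpace ℝ (Fin K) → ℝ) (hF : ∀ y, F y = No y ^ 2)
    (gF : EuclideanSpace ℝ (Fin K) → EuclideanSpace ℝ (Fin K))
    (hgF : ∀ y, HasGradientAt F (gF y) y)
    (hgFlip : ∀ y y', dualNorm No (gF y - gF y') ≤ L * No (y - y'))
    (Ni : ∀ i, EuclideanSpace ℝ (Fin (n i)) → ℝ) (hNi : ∀ i, IsNorm (Ni i))
    (φ : ∀ i, EuclideanSpace ℝ (Fin (n i)) → ℝ)
    (hφ : ∀ i x, φ i x = Ni i x ^ 2)
    (gφ : ∀ i, EuclideanSpace ℝ (Fin (n i)) → EuclideanSpace ℝ (Fin (n i)))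
    (hgφ : ∀ i x, HasGradientAt (φ i) (gφ i x) x)
    (hgφlip : ∀ i x x', dualNorm (Ni i) (gφ i x - gφ i x') ≤ ℓ * Ni i (x - x'))
    (f : PiLp 2 (fun i => EuclideanSpace ℝ (Fin (n i))) → ℝ)
    (hf : ∀ x, f x = Real.sqrt (F (WithLp.toLp 2 (fun i => φ i (x i))))) :
    (∃ M : PiLp 2 (fun i => EuclideanSpace ℝ (Fin (n i))) → ℝ,
      IsNorm M ∧ ∀ x, f x = M x ^ 2) ∧
    ∃ gf : PiLp 2 (fun i => EuclideanSpace ℝ (Fin (n i))) →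
        PiLp 2 (fun i => EuclideanSpace ℝ (Fin (n i))),
      (∀ x, HasGradientAt f (gf x) x) ∧
        ∀ x h, f (x + h) ≤ f x + ⟪gf x, h⟫ + 1 / 2 * (2 * L + ℓ) * f h :=
  stmt_15_general n No hNo hNoabs L ℓ hℓ F hF gF hgF hgFlip Ni hNi φ hφ gφ hgφ hgφlip f hf
end

section
/- Let F be the square of an absolute norm on ℝ^K, monotone on ℝ^K₊, and let φᵢ be squares of norms on ℝ^{nᵢ}. Then f(x) = F(φ₁(x₁),…,φ_K(x_K))^{1/2} is the square of a norm on ℝ^{n₁+…+n_K}; i.e., f(x)^{1/2} = F(φ(x))^{1/4} is a norm. -/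
open scoped RealInnerProductSpace
open Real Matrix

/-! An absolute norm `N` on `ℝ^ι` is monotone in the absolute values of the coordinates:
shrinking one coordinate from `d` to `c` with `|c| ≤ |d|` moves the point onto the segment
between the vectors with that coordinate `d` and `-d`, where `N` takes the same value.

For seminorms `pᵢ`, put `A² = N(p(x)²)` and `B² = N(p(y)²)`. The weighted bound
`(a + b)² ≤ (A + B)(a²/A + b²/B)`, applied coordinatewise to `pᵢ(x + y)² ≤ (pᵢ x + pᵢ y)²`,
together with monotonicity and the triangle inequality for `N`, gives `N(p(x + y)²) ≤ (A + B)²`,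
which is the triangle inequality for `√(N(p(·)²))`. -/

open Function

lemma IsNorm.convexOn {E : Type*} [AddCommGroup E] [Module ℝ E] {N : E → ℝ} (hN : IsNorm N) :
    ConvexOn ℝ Set.univ N := by
  refine ⟨convex_univ, fun x _ y _ a b ha hb _ => ?_⟩
  calc N (a • x + b • y) ≤ N (a • x) + N (b • y) := hN.2.2.2 _ _
    _ = a • N x + b • N y := by
      rw [hN.2.2.1, hN.2.2.1, abs_of_nonneg ha, abs_of_nonneg hb, smul_eq_mul, smul_eq_mul]

section AbsoluteNorm

variable {ι : Type*} {N : EuclideanSpace ℝ ι → ℝ}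

lemma IsNorm.update_le_update [DecidableEq ι] (hN : IsNorm N)
    (habs : ∀ t : EuclideanSpace ℝ ι, N t = N (WithLp.toLp 2 fun i => |t i|))
    (v : ι → ℝ) (i : ι) {c d : ℝ} (hcd : |c| ≤ |d|) :
    N (WithLp.toLp 2 (update v i c)) ≤ N (WithLp.toLp 2 (update v i d)) := by
  rcases eq_or_ne d 0 with rfl | hd
  · rw [abs_zero, abs_nonpos_iff] at hcd
    rw [hcd]
  set θ := (1 + c / d) / 2
  have hcd' : |c / d| ≤ 1 := by
    rwa [abs_div, div_le_one (abs_pos.2 hd)]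
  have hθ0 : 0 ≤ θ := by simp only [θ]; linarith [neg_abs_le (c / d)]
  have hθ1 : 0 ≤ 1 - θ := by simp only [θ]; linarith [le_abs_self (c / d)]
  have hsplit : WithLp.toLp 2 (update v i c) =
      θ • WithLp.toLp 2 (update v i d) + (1 - θ) • WithLp.toLp 2 (update v i (-d)) := by
    ext j
    rcases eq_or_ne j i with rfl | hj
    · simp only [PiLp.add_apply, PiLp.smul_apply, update_self, smul_eq_mul, θ]
      field_simp
      ring
    · simp [hj]
      ring
  have hflip : N (WithLp.toLp 2 (update v i (-d))) = N (WithLp.toLp 2 (update v i d)) := by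
    rw [habs, habs (WithLp.toLp 2 (update v i d))]
    congr 1
    ext j
    rcases eq_or_ne j i with rfl | hj <;> simp [*]
  calc N (WithLp.toLp 2 (update v i c))
      ≤ θ • N (WithLp.toLp 2 (update v i d)) + (1 - θ) • N (WithLp.toLp 2 (update v i (-d))) := by
        rw [hsplit]; exact hN.convexOn.2 trivial trivial hθ0 hθ1 (by ring)
    _ = N (WithLp.toLp 2 (update v i d)) := by
        rw [hflip, smul_eq_mul, smul_eq_mul]; ring

lemma IsNorm.le_of_abs_le_abs [Fintype ι] (hN : IsNorm N)
    (habs : ∀ t : EuclideanSpace ℝ ι, N t = N (WithLp.toLp 2 fun i => |t i|))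
    {u v : EuclideanSpace ℝ ι} (h : ∀ i, |u i| ≤ |v i|) : N u ≤ N v := by
  classical
  have hpiecewise : ∀ s : Finset ι, N u ≤ N (WithLp.toLp 2 (s.piecewise v.ofLp u.ofLp)) := by
    intro s
    induction s using Finset.induction_on with
    | empty => simp
    | insert a s ha ih =>
      calc N u ≤ N (WithLp.toLp 2 (s.piecewise v.ofLp u.ofLp)) := ih
        _ = N (WithLp.toLp 2 (update (s.piecewise v.ofLp u.ofLp) a (u a))) := by
          rw [update_eq_self_iff.2 (s.piecewise_eq_of_notMem _ _ ha).symm]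
        _ ≤ N (WithLp.toLp 2 (update (s.piecewise v.ofLp u.ofLp) a (v a))) :=
          hN.update_le_update habs _ a (h a)
        _ = N (WithLp.toLp 2 ((insert a s).piecewise v.ofLp u.ofLp)) := by
          rw [Finset.piecewise_insert]
  simpa using hpiecewise Finset.univ

end AbsoluteNorm

lemma add_sq_le_mul_add_inv_mul {a b A B : ℝ} (hA : 0 < A) (hB : 0 < B) :
    (a + b) ^ 2 ≤ (A + B) * (A⁻¹ * a ^ 2 + B⁻¹ * b ^ 2) := by
  have hdiff : (A + B) * (A⁻¹ * a ^ 2 + B⁻¹ * b ^ 2) - (a + b) ^ 2 = (B * a - A * b) ^ 2 / (A * B) := by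
    field_simp
    ring
  rw [← sub_nonneg, hdiff]
  positivity

section SeminormComposition

variable {ι E : Type*} [Fintype ι] [AddCommGroup E] [Module ℝ E] {N : EuclideanSpace ℝ ι → ℝ}

lemma IsNorm.apply_sq_seminorm_add_le (hN : IsNorm N)
    (habs : ∀ t : EuclideanSpace ℝ ι, N t = N (WithLp.toLp 2 fun i => |t i|))
    (p : ι → Seminorm ℝ E) {x y : E} (hx : 0 < N (WithLp.toLp 2 fun i => p i x ^ 2))
    (hy : 0 < N (WithLp.toLp 2 fun i => p i y ^ 2)) :
    N (WithLp.toLp 2 fun i => p i (x + y) ^ 2) ≤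
      (√(N (WithLp.toLp 2 fun i => p i x ^ 2)) + √(N (WithLp.toLp 2 fun i => p i y ^ 2))) ^ 2 := by
  set X : EuclideanSpace ℝ ι := WithLp.toLp 2 fun i => p i x ^ 2
  set Y : EuclideanSpace ℝ ι := WithLp.toLp 2 fun i => p i y ^ 2
  set A := √(N X)
  set B := √(N Y)
  have hA : 0 < A := Real.sqrt_pos.2 hx
  have hB : 0 < B := Real.sqrt_pos.2 hy
  have hpt : ∀ i, |p i (x + y) ^ 2| ≤ |((A + B) • (A⁻¹ • X + B⁻¹ • Y) : EuclideanSpace ℝ ι) i| := by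
    intro i
    simp only [PiLp.add_apply, PiLp.smul_apply, smul_eq_mul, X, Y]
    rw [abs_of_nonneg (sq_nonneg _), abs_of_nonneg (by positivity)]
    calc p i (x + y) ^ 2 ≤ (p i x + p i y) ^ 2 :=
          pow_le_pow_left₀ (apply_nonneg _ _) (map_add_le_add _ _ _) 2
      _ ≤ (A + B) * (A⁻¹ * p i x ^ 2 + B⁻¹ * p i y ^ 2) := add_sq_le_mul_add_inv_mul hA hB
  calc N (WithLp.toLp 2 fun i => p i (x + y) ^ 2)
      ≤ N ((A + B) • (A⁻¹ • X + B⁻¹ • Y)) := hN.le_of_abs_le_abs habs hpt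
    _ ≤ (A + B) * (A⁻¹ * N X + B⁻¹ * N Y) := by
        rw [hN.2.2.1, abs_of_pos (by positivity)]
        gcongr
        refine (hN.2.2.2 _ _).trans_eq ?_
        rw [hN.2.2.1, hN.2.2.1, abs_of_pos (inv_pos.2 hA), abs_of_pos (inv_pos.2 hB)]
    _ = (A + B) ^ 2 := by
        rw [← Real.sq_sqrt hx.le, ← Real.sq_sqrt hy.le]
        field_simp
        ring

theorem IsNorm.sqrt_comp_sq_seminorm (hN : IsNorm N)
    (habs : ∀ t : EuclideanSpace ℝ ι, N t = N (WithLp.toLp 2 fun i => |t i|))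
    (p : ι → Seminorm ℝ E) (hp : ∀ x, (∀ i, p i x = 0) → x = 0) :
    IsNorm fun x => √(N (WithLp.toLp 2 fun i => p i x ^ 2)) := by
  have hdef : ∀ x, N (WithLp.toLp 2 fun i => p i x ^ 2) = 0 ↔ x = 0 := by
    intro x
    rw [hN.2.1]
    constructor
    · intro h
      refine hp x fun i => ?_
      simpa using congrArg (· i) h
    · rintro rfl
      ext i
      simp
  have hpos : ∀ x, x ≠ 0 → 0 < N (WithLp.toLp 2 fun i => p i x ^ 2) := fun x hx =>
    (hN.1 _).lt_of_ne' ((hdef x).not.2 hx)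
  refine ⟨fun x => Real.sqrt_nonneg _, fun x => (Real.sqrt_eq_zero (hN.1 _)).trans (hdef x),
    fun c x => ?_, fun x y => ?_⟩
  · have hvec : (WithLp.toLp 2 fun i => p i (c • x) ^ 2 : EuclideanSpace ℝ ι) =
        c ^ 2 • WithLp.toLp 2 fun i => p i x ^ 2 := by
      ext i
      simp [map_smul_eq_mul, mul_pow]
    dsimp only
    rw [hvec, hN.2.2.1, abs_of_nonneg (sq_nonneg c), Real.sqrt_mul (sq_nonneg c),
      Real.sqrt_sq_eq_abs]
  · rcases eq_or_ne x 0 with rfl | hx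
    · simp
    rcases eq_or_ne y 0 with rfl | hy
    · simp
    calc _ ≤ √((√(N (WithLp.toLp 2 fun i => p i x ^ 2)) +
            √(N (WithLp.toLp 2 fun i => p i y ^ 2))) ^ 2) :=
          Real.sqrt_le_sqrt (hN.apply_sq_seminorm_add_le habs p (hpos x hx) (hpos y hy))
      _ = _ := Real.sqrt_sq (by positivity)

end SeminormComposition

/-- if `F` is the square of an absolute norm and `φᵢ` are squares
of norms, then `f(x) = F(φ₁(x₁),…,φ_K(x_K))^{1/2}` is the square of a norm:
`F(φ(x))^{1/4}` is a norm. -/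
theorem stmt_16 {K : ℕ} (n : Fin K → ℕ)
    (No : EuclideanSpace ℝ (Fin K) → ℝ) (hNo : IsNorm No)
    (hNoabs : ∀ t : EuclideanSpace ℝ (Fin K), No t = No (WithLp.toLp 2 (fun i => |t i|)))
    (F : EuclideanSpace ℝ (Fin K) → ℝ) (hF : ∀ y, F y = No y ^ 2)
    (Ni : ∀ i, EuclideanSpace ℝ (Fin (n i)) → ℝ) (hNi : ∀ i, IsNorm (Ni i))
    (φ : ∀ i, EuclideanSpace ℝ (Fin (n i)) → ℝ)
    (hφ : ∀ i x, φ i x = Ni i x ^ 2)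
    (f : PiLp 2 (fun i => EuclideanSpace ℝ (Fin (n i))) → ℝ)
    (hf : ∀ x, f x = (F (WithLp.toLp 2 (fun i => φ i (x i)))) ^ ((1 : ℝ) / 2)) :
    (∃ M : PiLp 2 (fun i => EuclideanSpace ℝ (Fin (n i))) → ℝ,
      IsNorm M ∧ ∀ x, f x = M x ^ 2) ∧
    IsNorm (fun x : PiLp 2 (fun i => EuclideanSpace ℝ (Fin (n i))) =>
      (F (WithLp.toLp 2 (fun i => φ i (x i)))) ^ ((1 : ℝ) / 4)) := by
  let p : ∀ i, Seminorm ℝ (PiLp 2 fun i => EuclideanSpace ℝ (Fin (n i))) := fun i =>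
    Seminorm.of (fun x => Ni i (x i)) (fun x y => (hNi i).2.2.2 (x i) (y i))
      (fun c x => (hNi i).2.2.1 c (x i))
  have hp : ∀ x, (∀ i, p i x = 0) → x = 0 := fun x hx =>
    WithLp.ofLp_injective 2 (funext fun i => ((hNi i).2.1 (x i)).1 (hx i))
  have hquarter : ∀ x, F (WithLp.toLp 2 fun i => φ i (x i)) ^ ((1 : ℝ) / 4) =
      √(No (WithLp.toLp 2 fun i => p i x ^ 2)) := by
    intro x
    rw [hF, Real.sqrt_eq_rpow, ← Real.rpow_natCast, ← Real.rpow_mul (hNo.1 _)]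
    norm_num [hφ, p]
    rfl
  have hM := hNo.sqrt_comp_sq_seminorm hNoabs p hp
  simp only [← hquarter] at hM
  refine ⟨⟨_, hM, fun x => ?_⟩, hM⟩
  have hF0 : 0 ≤ F (WithLp.toLp 2 fun i => φ i (x i)) := by rw [hF]; positivity
  rw [hf, ← Real.rpow_natCast, ← Real.rpow_mul hF0]
  norm_num
end
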